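/- arXiv:2110.06919 — 4 statements merged into one kernel-verified Lean document; each statement's English description precedes it below -/
import Mathlib

section
/- Let T be a tournament on n vertices. For every vertex u ∈ V(T) there exists a vertex v ∈ V(T), v ≠ u, such that c(u,v) ≥ (n-3)/4, where c(u,v) = max{|N⁺(u) ∩ N⁻(v)|, |N⁺(v) ∩ N⁻(u)|}. (Assume n ≥ 2.) -/
open Finset

/-- A tournament: irreflexive and for each pair of distinct vertices exactly one direction. -/
def IsTournament {V : Type*} (r : V → V → Prop) : Prop :=
  (∀ v, ¬ r v v) ∧ ∀ u v : V, u ≠ v → (r u v ↔ ¬ r v u)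

/-- Out-neighborhood. -/
def outN {V : Type*} [Fintype V] (r : V → V → Prop) [DecidableRel r] (v : V) : Finset V :=
  Finset.univ.filter (fun u => r v u)

/-- In-neighborhood. -/
def inN {V : Type*} [Fintype V] (r : V → V → Prop) [DecidableRel r] (v : V) : Finset V :=
  Finset.univ.filter (fun u => r u v)

/-- c(u,v) = max(|N⁺(u) ∩ N⁻(v)|, |N⁺(v) ∩ N⁻(u)|). -/
def conn {V : Type*} [Fintype V] [DecidableEq V] (r : V → V → Prop) [DecidableRel r]
    (u v : V) : ℕ :=
  max ((outN r u ∩ inN r v).card) ((outN r v ∩ inN r u).card)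

/-- In any finset of a tournament, some vertex has in-degree (within the set) at least
(|S|-1)/2. -/
lemma tourn_key {V : Type*} [DecidableEq V] (r : V → V → Prop)
    [DecidableRel r] (hT : IsTournament r) (S : Finset V) (hS : S.Nonempty) :
    ∃ v ∈ S, S.card ≤ 2 * (S.filter (fun w => r w v)).card + 1 := by
  classical
  set f : V → ℕ := fun v => (S.filter (fun w => r w v)).card with hf
  have hsum : ∑ v ∈ S, f v = ∑ v ∈ S, (S.filter (fun w => r v w)).card := by
    simp only [hf, Finset.card_filter]
    exact Finset.sum_comm
  have htot : 2 * ∑ v ∈ S, f v = S.card * S.card - S.card := by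
    have h2 : ∑ v ∈ S, f v + ∑ v ∈ S, (S.filter (fun w => r v w)).card
        = S.card * S.card - S.card := by
      simp only [hf, Finset.card_filter]
      rw [← Finset.sum_add_distrib]
      have hrow : ∀ v ∈ S,
          ((∑ w ∈ S, if r w v then 1 else 0) + ∑ w ∈ S, if r v w then 1 else 0)
          = S.card - 1 := by
        intro v hv
        rw [← Finset.sum_add_distrib]
        have hterm : ∀ w ∈ S, ((if r w v then 1 else 0) + if r v w then 1 else 0)
            = if w = v then 0 else 1 := by
          intro w hw
          by_cases h : w = v
          · subst h; simp [hT.1 w]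
          · have hiff := hT.2 w v h
            by_cases h1 : r w v
            · have : ¬ r v w := hiff.mp h1
              simp [h1, this, h]
            · have : r v w := by
                by_contra h2
                exact h1 (hiff.mpr h2)
              simp [h1, this, h]
        rw [Finset.sum_congr rfl hterm]
        calc (∑ w ∈ S, if w = v then 0 else 1)
            = ∑ w ∈ S, (if ¬ (w = v) then 1 else 0) := by
              refine Finset.sum_congr rfl fun w _ => ?_
              by_cases h : w = v <;> simp [h]
          _ = (S.filter (fun w => ¬ (w = v))).card := (Finset.card_filter _ _).symm
          _ = (S.erase v).card := by
              congr 1; ext w; simp [Finset.mem_erase, and_comm]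
          _ = S.card - 1 := Finset.card_erase_of_mem hv
      rw [Finset.sum_congr rfl hrow, Finset.sum_const, smul_eq_mul]
      have h1 : 1 ≤ S.card := Finset.card_pos.mpr hS
      obtain ⟨k, hk⟩ := Nat.exists_eq_add_of_le' h1
      rw [hk, Nat.add_sub_cancel, Nat.mul_succ]
      omega
    omega
  by_contra hcon
  push_neg at hcon
  have hle : ∀ v ∈ S, 2 * f v + 2 ≤ S.card := by
    intro v hv
    have h := hcon v hv
    show 2 * (S.filter (fun w => r w v)).card + 2 ≤ S.card
    omega
  have hsum2 : ∑ v ∈ S, (2 * f v + 2) ≤ ∑ v ∈ S, S.card :=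
    Finset.sum_le_sum hle
  rw [Finset.sum_const, smul_eq_mul] at hsum2
  have hexp : ∑ v ∈ S, (2 * f v + 2) = 2 * (∑ v ∈ S, f v) + 2 * S.card := by
    rw [Finset.sum_add_distrib, Finset.mul_sum, Finset.sum_const, smul_eq_mul]
    ring
  have h1 : 1 ≤ S.card := Finset.card_pos.mpr hS
  have hsq : S.card ≤ S.card * S.card := Nat.le_mul_of_pos_left _ h1
  omega

lemma tourn_key' {V : Type*} [DecidableEq V] (r : V → V → Prop)
    [DecidableRel r] (hT : IsTournament r) (S : Finset V) (hS : S.Nonempty) :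
    ∃ v ∈ S, S.card ≤ 2 * (S.filter (fun w => r v w)).card + 1 := by
  classical
  set f : V → ℕ := fun v => (S.filter (fun w => r v w)).card with hf
  have hsum : ∑ v ∈ S, f v = ∑ v ∈ S, (S.filter (fun w => r w v)).card := by
    simp only [hf, Finset.card_filter]
    exact Finset.sum_comm
  have htot : 2 * ∑ v ∈ S, f v = S.card * S.card - S.card := by
    have h2 : ∑ v ∈ S, f v + ∑ v ∈ S, (S.filter (fun w => r w v)).card
        = S.card * S.card - S.card := by
      simp only [hf, Finset.card_filter]
      rw [← Finset.sum_add_distrib]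
      have hrow : ∀ v ∈ S,
          ((∑ w ∈ S, if r v w then 1 else 0) + ∑ w ∈ S, if r w v then 1 else 0)
          = S.card - 1 := by
        intro v hv
        rw [← Finset.sum_add_distrib]
        have hterm : ∀ w ∈ S, ((if r v w then 1 else 0) + if r w v then 1 else 0)
            = if w = v then 0 else 1 := by
          intro w hw
          by_cases h : w = v
          · subst h; simp [hT.1 w]
          · have hiff := hT.2 w v h
            by_cases h1 : r w v
            · have : ¬ r v w := hiff.mp h1
              simp [h1, this, h]
            · have : r v w := by
                by_contra h2
                exact h1 (hiff.mpr h2)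
              simp [h1, this, h]
        rw [Finset.sum_congr rfl hterm]
        calc (∑ w ∈ S, if w = v then 0 else 1)
            = ∑ w ∈ S, (if ¬ (w = v) then 1 else 0) := by
              refine Finset.sum_congr rfl fun w _ => ?_
              by_cases h : w = v <;> simp [h]
          _ = (S.filter (fun w => ¬ (w = v))).card := (Finset.card_filter _ _).symm
          _ = (S.erase v).card := by
              congr 1; ext w; simp [Finset.mem_erase, and_comm]
          _ = S.card - 1 := Finset.card_erase_of_mem hv
      rw [Finset.sum_congr rfl hrow, Finset.sum_const, smul_eq_mul]
      have h1 : 1 ≤ S.card := Finset.card_pos.mpr hS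
      obtain ⟨k, hk⟩ := Nat.exists_eq_add_of_le' h1
      rw [hk, Nat.add_sub_cancel, Nat.mul_succ]
      omega
    omega
  by_contra hcon
  push_neg at hcon
  have hle : ∀ v ∈ S, 2 * f v + 2 ≤ S.card := by
    intro v hv
    have h := hcon v hv
    show 2 * (S.filter (fun w => r v w)).card + 2 ≤ S.card
    omega
  have hsum2 : ∑ v ∈ S, (2 * f v + 2) ≤ ∑ v ∈ S, S.card :=
    Finset.sum_le_sum hle
  rw [Finset.sum_const, smul_eq_mul] at hsum2
  have hexp : ∑ v ∈ S, (2 * f v + 2) = 2 * (∑ v ∈ S, f v) + 2 * S.card := by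
    rw [Finset.sum_add_distrib, Finset.mul_sum, Finset.sum_const, smul_eq_mul]
    ring
  have h1 : 1 ≤ S.card := Finset.card_pos.mpr hS
  have hsq : S.card ≤ S.card * S.card := Nat.le_mul_of_pos_left _ h1
  omega


/-- for every vertex u there is v ≠ u with c(u,v) ≥ (n-3)/4. -/
theorem exists_well_connected {V : Type*} [Fintype V] [DecidableEq V] (r : V → V → Prop)
    [DecidableRel r] (hT : IsTournament r) (hn : 2 ≤ Fintype.card V) (u : V) :
    ∃ v : V, v ≠ u ∧ ((conn r u v : ℝ) ≥ ((Fintype.card V : ℝ) - 3) / 4) := by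
  classical
  set n := Fintype.card V with hnn
  set A := outN r u with hA
  set B := inN r u with hB
  have huA : u ∉ A := by simp [hA, outN, hT.1 u]
  have huB : u ∉ B := by simp [hB, inN, hT.1 u]
  have hdisj : Disjoint A B := by
    rw [Finset.disjoint_left]
    intro w hwA hwB
    simp only [hA, hB, outN, inN, Finset.mem_filter, Finset.mem_univ, true_and] at hwA hwB
    have hne : w ≠ u := fun h => hT.1 u (h ▸ hwA)
    exact (hT.2 u w hne.symm).mp hwA hwB
  have hunion : A ∪ B = Finset.univ.erase u := by
    ext w
    simp only [hA, hB, outN, inN, Finset.mem_union, Finset.mem_filter, Finset.mem_univ,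
      true_and, Finset.mem_erase, and_true]
    constructor
    · rintro (h | h)
      · exact fun he => hT.1 u (he ▸ h)
      · exact fun he => hT.1 u (he ▸ h)
    · intro hne
      by_cases h : r u w
      · exact Or.inl h
      · exact Or.inr ((hT.2 w u hne).mpr h)
  have hcard : A.card + B.card = n - 1 := by
    rw [← Finset.card_union_of_disjoint hdisj, hunion, Finset.card_erase_of_mem
      (Finset.mem_univ u), Finset.card_univ]
  -- main step, abstracted: given a suitable set and a bound on conn, finish
  have hfinish : ∀ v : V, v ≠ u → n ≤ 4 * conn r u v + 3 →
      ((conn r u v : ℝ) ≥ ((n : ℝ) - 3) / 4) := by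
    intro v hv h
    rw [ge_iff_le, div_le_iff₀ (by norm_num : (0:ℝ) < 4)]
    have : (n : ℝ) ≤ 4 * (conn r u v : ℝ) + 3 := by exact_mod_cast h
    linarith
  by_cases hAB : B.card ≤ A.card
  · -- use A = outN u
    have hA2 : n - 1 ≤ 2 * A.card := by omega
    have hAne : A.Nonempty := by
      rw [← Finset.card_pos]; omega
    obtain ⟨v, hvA, hvcard⟩ := tourn_key r hT A hAne
    have hvu : v ≠ u := fun h => huA (h ▸ hvA)
    have hset : A.filter (fun w => r w v) = outN r u ∩ inN r v := by
      ext w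
      simp [hA, outN, inN, Finset.mem_filter, and_comm]
    refine ⟨v, hvu, hfinish v hvu ?_⟩
    have hc : (A.filter (fun w => r w v)).card ≤ conn r u v := by
      rw [hset]; exact le_max_left _ _
    omega
  · -- use B = inN u, with the reversed tournament
    have hB2 : n - 1 ≤ 2 * B.card := by omega
    have hBne : B.Nonempty := by
      rw [← Finset.card_pos]; omega
    obtain ⟨v, hvB, hvcard⟩ := tourn_key' r hT B hBne
    have hvu : v ≠ u := fun h => huB (h ▸ hvB)
    have hset : B.filter (fun w => r v w) = outN r v ∩ inN r u := by
      ext w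
      simp [hB, outN, inN, Finset.mem_filter, and_comm]
    refine ⟨v, hvu, hfinish v hvu ?_⟩
    have hc : (B.filter (fun w => r v w)).card ≤ conn r u v := by
      rw [hset]; exact le_max_right _ _
    have h4 : n ≤ 4 * (B.filter (fun w => r v w)).card + 3 := by omega
    exact h4.trans (Nat.add_le_add_right (Nat.mul_le_mul_left 4 hc) 3)
end

section
/- Let T be a tournament and t ≥ 1 an integer. Define the undirected graph T_{≤t} on the vertex set V(T), in which distinct vertices u,v are adjacent if and only if c(u,v) ≤ t, where c(u,v) = max{|N⁺(u) ∩ N⁻(v)|, |N⁺(v) ∩ N⁻(u)|}. Then the maximum degree of T_{≤t} is at most 4t + 2. -/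
open Finset

lemma tourn_card_bound {V : Type*} [DecidableEq V] (r : V → V → Prop) [DecidableRel r]
    (hT : IsTournament r) (t : ℕ) (S : Finset V)
    (h : ∀ u ∈ S, (S.filter (fun w => r w u)).card ≤ t) : S.card ≤ 2 * t + 1 := by
  rcases S.eq_empty_or_nonempty with rfl | hS
  · simp
  have key : ∀ u ∈ S, (S.filter (fun w => r w u)).card + (S.filter (fun w => r u w)).card
      = S.card - 1 := by
    intro u hu
    have hdisj : Disjoint (S.filter (fun w => r w u)) (S.filter (fun w => r u w)) := by
      rw [Finset.disjoint_left]
      intro w hw1 hw2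
      have h1 := (Finset.mem_filter.mp hw1).2
      have h2 := (Finset.mem_filter.mp hw2).2
      rcases eq_or_ne w u with rfl | hne
      · exact hT.1 w h1
      · exact ((hT.2 w u hne).mp h1) h2
    rw [← Finset.card_union_of_disjoint hdisj]
    have : S.filter (fun w => r w u) ∪ S.filter (fun w => r u w) = S.erase u := by
      ext w
      simp only [Finset.mem_union, Finset.mem_filter, Finset.mem_erase]
      constructor
      · rintro (⟨hw, hr⟩ | ⟨hw, hr⟩)
        · refine ⟨fun he => hT.1 u (he ▸ hr), hw⟩
        · exact ⟨fun he => hT.1 u (he ▸ hr), hw⟩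
      · rintro ⟨hne, hw⟩
        by_cases hr : r w u
        · exact Or.inl ⟨hw, hr⟩
        · exact Or.inr ⟨hw, ((hT.2 u w (Ne.symm hne)).mpr hr)⟩
    rw [this, Finset.card_erase_of_mem hu]
  have hsum : ∑ u ∈ S, (S.filter (fun w => r w u)).card
      = ∑ u ∈ S, (S.filter (fun w => r u w)).card := by
    simp only [Finset.card_filter]
    exact Finset.sum_comm
  have htot : ∑ u ∈ S, ((S.filter (fun w => r w u)).card + (S.filter (fun w => r u w)).card)
      = S.card * (S.card - 1) := by
    rw [Finset.sum_congr rfl key, Finset.sum_const, smul_eq_mul]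
  have hle : ∑ u ∈ S, (S.filter (fun w => r w u)).card ≤ t * S.card := by
    calc ∑ u ∈ S, (S.filter (fun w => r w u)).card ≤ ∑ _u ∈ S, t := Finset.sum_le_sum h
      _ = t * S.card := by rw [Finset.sum_const, smul_eq_mul, mul_comm]
  have h2 : S.card * (S.card - 1) ≤ 2 * t * S.card := by
    rw [← htot, Finset.sum_add_distrib, ← hsum, two_mul, add_mul]
    exact Nat.add_le_add hle hle
  have hpos : 0 < S.card := hS.card_pos
  have h3 : (S.card - 1) * S.card ≤ 2 * t * S.card := by
    rw [Nat.mul_comm]; exact h2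
  have := Nat.le_of_mul_le_mul_right h3 hpos
  omega

lemma flip_tournament {V : Type*} (r : V → V → Prop) (hT : IsTournament r) :
    IsTournament (fun a b => r b a) :=
  ⟨hT.1, fun u v h => hT.2 v u h.symm⟩

lemma tourn_card_bound' {V : Type*} [DecidableEq V] (r : V → V → Prop) [inst : DecidableRel r]
    (hT : IsTournament r) (t : ℕ) (S : Finset V)
    (h : ∀ u ∈ S, (S.filter (fun w => r u w)).card ≤ t) : S.card ≤ 2 * t + 1 := by
  letI instFlip : DecidableRel (fun a b : V => r b a) := fun a b => inst b a
  exact tourn_card_bound (fun a b => r b a) (flip_tournament r hT) t S h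

/-- the graph T_{≤t}, in which distinct u,v are adjacent iff c(u,v) ≤ t,
has maximum degree at most 4t+2. -/
theorem maxDegree_le {V : Type*} [Fintype V] [DecidableEq V] (r : V → V → Prop)
    [DecidableRel r] (hT : IsTournament r) (t : ℕ) (ht : 1 ≤ t) (v : V) :
    (Finset.univ.filter (fun u => u ≠ v ∧ conn r u v ≤ t)).card ≤ 4 * t + 2 := by
  set D := Finset.univ.filter (fun u => u ≠ v ∧ conn r u v ≤ t) with hD
  set Dp := D.filter (fun u => r v u) with hDp
  set Dm := D.filter (fun u => r u v) with hDm
  have hsub : D ⊆ Dp ∪ Dm := by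
    intro u hu
    have hne : u ≠ v := (Finset.mem_filter.mp hu).2.1
    by_cases hr : r v u
    · exact Finset.mem_union.mpr (Or.inl (Finset.mem_filter.mpr ⟨hu, hr⟩))
    · exact Finset.mem_union.mpr (Or.inr (Finset.mem_filter.mpr ⟨hu, (hT.2 u v hne).mpr hr⟩))
  have h1 : Dp.card ≤ 2 * t + 1 := by
    apply tourn_card_bound r hT t
    intro u hu
    have hconn : conn r u v ≤ t := (Finset.mem_filter.mp ((Finset.mem_filter.mp hu).1)).2.2
    have hsubset : Dp.filter (fun w => r w u) ⊆ outN r v ∩ inN r u := by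
      intro w hw
      have h1 := Finset.mem_filter.mp hw
      have h2 := (Finset.mem_filter.mp h1.1).2
      simp only [Finset.mem_inter, outN, inN, Finset.mem_filter, Finset.mem_univ, true_and]
      exact ⟨h2, h1.2⟩
    calc (Dp.filter (fun w => r w u)).card ≤ (outN r v ∩ inN r u).card :=
          Finset.card_le_card hsubset
      _ ≤ conn r u v := le_max_right _ _
      _ ≤ t := hconn
  have h2 : Dm.card ≤ 2 * t + 1 := by
    apply tourn_card_bound' r hT t
    intro u hu
    have hconn : conn r u v ≤ t := (Finset.mem_filter.mp ((Finset.mem_filter.mp hu).1)).2.2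
    have hsubset : Dm.filter (fun w => r u w) ⊆ outN r u ∩ inN r v := by
      intro w hw
      have h1 := Finset.mem_filter.mp hw
      have h2 := (Finset.mem_filter.mp h1.1).2
      simp only [Finset.mem_inter, outN, inN, Finset.mem_filter, Finset.mem_univ, true_and]
      exact ⟨h1.2, h2⟩
    calc (Dm.filter (fun w => r u w)).card ≤ (outN r u ∩ inN r v).card :=
          Finset.card_le_card hsubset
      _ ≤ conn r u v := le_max_left _ _
      _ ≤ t := hconn
  calc D.card ≤ (Dp ∪ Dm).card := Finset.card_le_card hsub
    _ ≤ Dp.card + Dm.card := Finset.card_union_le _ _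
    _ ≤ 4 * t + 2 := by omega
end

section
/- Let T be a tournament and t ≥ 1 an integer. The number of unordered pairs {u,v} of distinct vertices of T with c(u,v) ≤ t is at most (2t+1)·n, where n = |V(T)| and c(u,v) = max{|N⁺(u) ∩ N⁻(v)|, |N⁺(v) ∩ N⁻(u)|}. -/
open Finset

lemma few_small_indeg {V : Type*} [Fintype V] [DecidableEq V] (r : V → V → Prop)
    [DecidableRel r] (hT : IsTournament r) (t : ℕ) (A : Finset V) :
    (A.filter (fun v => (A ∩ inN r v).card ≤ t)).card ≤ 2 * t + 1 := by
  set S := A.filter (fun v => (A ∩ inN r v).card ≤ t) with hSdef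
  by_contra h
  push_neg at h
  have hsum1 : ∀ v ∈ S, (S ∩ inN r v).card = ∑ u ∈ S, (if r u v then 1 else 0) := by
    intro v _
    have : S ∩ inN r v = S.filter (fun u => r u v) := by
      simp [inN, Finset.filter_filter, Finset.inter_comm]
      ext u; simp [inN]; tauto
    rw [this, Finset.card_filter]
  have h1 : ∑ v ∈ S, (S ∩ inN r v).card ≤ t * S.card := by
    calc ∑ v ∈ S, (S ∩ inN r v).card ≤ ∑ v ∈ S, t := by
          apply Finset.sum_le_sum
          intro v hv
          have hv' := (Finset.mem_filter.mp hv).2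
          exact le_trans (Finset.card_le_card (by
            apply Finset.inter_subset_inter_right
            exact Finset.filter_subset _ _)) hv'
      _ = t * S.card := by rw [Finset.sum_const, smul_eq_mul, mul_comm]
  have h2 : 2 * ∑ v ∈ S, (S ∩ inN r v).card = S.card * (S.card - 1) := by
    have e1 : ∑ v ∈ S, (S ∩ inN r v).card
        = ∑ v ∈ S, ∑ u ∈ S, (if r u v then 1 else 0) :=
      Finset.sum_congr rfl hsum1
    have e2 : ∑ v ∈ S, ∑ u ∈ S, (if r u v then 1 else 0)
        = ∑ v ∈ S, ∑ u ∈ S, (if r v u then 1 else 0) := Finset.sum_comm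
    have e3 : ∀ v ∈ S, ∑ u ∈ S, ((if r u v then 1 else 0) + (if r v u then 1 else 0))
        = S.card - 1 := by
      intro v hv
      have : ∀ u ∈ S, ((if r u v then 1 else 0) + (if r v u then 1 else 0))
          = (if u = v then 0 else 1) := by
        intro u _
        by_cases huv : u = v
        · subst huv; simp [hT.1 u]
        · have := hT.2 u v huv
          by_cases hr : r u v
          · simp [hr, (this.mp hr), huv]
          · have : r v u := by
              by_contra hc; exact hr (this.mpr hc)
            simp [hr, this, huv]
      rw [Finset.sum_congr rfl this]
      have e4 : (∑ x ∈ S, if x = v then 0 else 1)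
          = (S.filter (fun x => ¬ x = v)).card := by
        rw [Finset.card_filter]
        apply Finset.sum_congr rfl
        intro x _; by_cases h : x = v <;> simp [h]
      rw [e4]
      have e5 : S.filter (fun x => ¬ x = v) = S.erase v := by
        ext x; simp [Finset.mem_erase, and_comm]
      rw [e5, Finset.card_erase_of_mem hv]
    calc 2 * ∑ v ∈ S, (S ∩ inN r v).card
        = ∑ v ∈ S, ∑ u ∈ S, (if r u v then 1 else 0)
          + ∑ v ∈ S, ∑ u ∈ S, (if r v u then 1 else 0) := by
          rw [two_mul]; rw [e1]; rw [e2]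
      _ = ∑ v ∈ S, ∑ u ∈ S, ((if r u v then 1 else 0) + (if r v u then 1 else 0)) := by
          rw [← Finset.sum_add_distrib]
          apply Finset.sum_congr rfl
          intro v _; rw [← Finset.sum_add_distrib]
      _ = ∑ v ∈ S, (S.card - 1) := Finset.sum_congr rfl e3
      _ = S.card * (S.card - 1) := by rw [Finset.sum_const, smul_eq_mul]
  have hs : 2 * t + 2 ≤ S.card := h
  have : S.card * (S.card - 1) ≤ 2 * (t * S.card) := by
    rw [← h2]; exact Nat.mul_le_mul_left 2 h1
  have hge : S.card * (2 * t + 1) ≤ S.card * (S.card - 1) := by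
    apply Nat.mul_le_mul_left
    omega
  nlinarith [hge, this]

/-- the number of unordered pairs {u,v} of distinct vertices with
c(u,v) ≤ t is at most (2t+1)·n. -/
theorem card_low_conn_pairs_le {V : Type*} [Fintype V] [DecidableEq V] (r : V → V → Prop)
    [DecidableRel r] (hT : IsTournament r) (t : ℕ) (ht : 1 ≤ t) :
    ((Finset.univ : Finset (Sym2 V)).filter
        (fun p => ¬ p.IsDiag ∧ ∀ u v : V, p = s(u, v) → conn r u v ≤ t)).card
      ≤ (2 * t + 1) * Fintype.card V := by
  classical
  set Q : Finset (V × V) := (univ ×ˢ univ).filter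
    (fun p => r p.1 p.2 ∧ (outN r p.1 ∩ inN r p.2).card ≤ t) with hQ
  have hsub : ((Finset.univ : Finset (Sym2 V)).filter
        (fun p => ¬ p.IsDiag ∧ ∀ u v : V, p = s(u, v) → conn r u v ≤ t))
      ⊆ Q.image (fun p => s(p.1, p.2)) := by
    intro p hp
    simp only [Finset.mem_filter, Finset.mem_univ, true_and] at hp
    induction p using Sym2.ind with
    | _ u v =>
      obtain ⟨hd, hc⟩ := hp
      have huv : u ≠ v := by simpa using hd
      have hconn := hc u v rfl
      rw [Finset.mem_image]
      by_cases hr : r u v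
      · refine ⟨(u, v), ?_, rfl⟩
        simp only [hQ, Finset.mem_filter, Finset.mem_product, Finset.mem_univ, true_and]
        exact ⟨hr, le_trans (le_max_left _ _) hconn⟩
      · have hr' : r v u := by
          by_contra hc'; exact hr ((hT.2 u v huv).mpr hc')
        refine ⟨(v, u), ?_, Sym2.eq_swap⟩
        simp only [hQ, Finset.mem_filter, Finset.mem_product, Finset.mem_univ, true_and]
        exact ⟨hr', le_trans (le_max_right _ _) hconn⟩
  have hTset : ∀ u : V, (Finset.univ.filter
      (fun v => r u v ∧ (outN r u ∩ inN r v).card ≤ t)).card ≤ 2 * t + 1 := by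
    intro u
    have : Finset.univ.filter (fun v => r u v ∧ (outN r u ∩ inN r v).card ≤ t)
        ⊆ (outN r u).filter (fun v => (outN r u ∩ inN r v).card ≤ t) := by
      intro v hv
      simp only [Finset.mem_filter, Finset.mem_univ, true_and] at hv ⊢
      exact ⟨by simp [outN, hv.1], hv.2⟩
    exact le_trans (Finset.card_le_card this) (few_small_indeg r hT t _)
  have hQsub : Q ⊆ Finset.univ.biUnion
      (fun u => ({u} : Finset V) ×ˢ (Finset.univ.filter
        (fun v => r u v ∧ (outN r u ∩ inN r v).card ≤ t))) := by
    intro p hp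
    simp only [hQ, Finset.mem_filter, Finset.mem_product, Finset.mem_univ, true_and] at hp
    simp only [Finset.mem_biUnion, Finset.mem_univ, Finset.mem_product, Finset.mem_singleton,
      Finset.mem_filter, true_and]
    exact ⟨p.1, rfl, hp⟩
  calc ((Finset.univ : Finset (Sym2 V)).filter
        (fun p => ¬ p.IsDiag ∧ ∀ u v : V, p = s(u, v) → conn r u v ≤ t)).card
      ≤ (Q.image (fun p => s(p.1, p.2))).card := Finset.card_le_card hsub
    _ ≤ Q.card := Finset.card_image_le
    _ ≤ (Finset.univ.biUnion (fun u => ({u} : Finset V) ×ˢ (Finset.univ.filter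
        (fun v => r u v ∧ (outN r u ∩ inN r v).card ≤ t)))).card := Finset.card_le_card hQsub
    _ ≤ ∑ u : V, (({u} : Finset V) ×ˢ (Finset.univ.filter
        (fun v => r u v ∧ (outN r u ∩ inN r v).card ≤ t))).card := Finset.card_biUnion_le
    _ ≤ ∑ u : V, (2 * t + 1) := by
        apply Finset.sum_le_sum
        intro u _
        rw [Finset.card_product, Finset.card_singleton, one_mul]
        exact hTset u
    _ = (2 * t + 1) * Fintype.card V := by
        rw [Finset.sum_const, smul_eq_mul, mul_comm, Finset.card_univ]
end

section
/- Let T be a tournament, k ≥ 1, and let A' = {v_1, …, v_k} be a set of k distinct vertices of T. Suppose there is an ordering e_1, e_2, …, e_{k(k-1)/2} of all pairs (v_i, v_j) with i < j such that for every t ≤ k(k-1)/2, writing e_t = (v_i, v_j), we have |(N⁺(v_i) ∩ N⁻(v_j)) \ A'| ≥ t. Then T contains a copy of the 1-subdivision of the transitive tournament T_k, with base vertices v_1, …, v_k. -/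
open Finset

/-- The edge relation of the 1-subdivision H_k of the transitive tournament T_k:
each edge (v_i, v_j), i < j, is replaced by the path v_i → w_{i,j} → v_j. -/
def HkAdj (k : ℕ) :
    (Fin k ⊕ {p : Fin k × Fin k // p.1 < p.2}) →
    (Fin k ⊕ {p : Fin k × Fin k // p.1 < p.2}) → Prop
  | Sum.inl i, Sum.inr w => w.1.1 = i
  | Sum.inr w, Sum.inl j => w.1.2 = j
  | _, _ => False

lemma pick_injective {V : Type*} [DecidableEq V] :
    ∀ (n : ℕ) (S : Fin n → Finset V), (∀ t, t.1 + 1 ≤ (S t).card) →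
    ∃ g : Fin n → V, Function.Injective g ∧ ∀ t, g t ∈ S t := by
  intro n
  induction n with
  | zero => exact fun S _ => ⟨fun t => t.elim0, fun t => t.elim0, fun t => t.elim0⟩
  | succ n ih =>
    intro S hS
    obtain ⟨g, hginj, hgmem⟩ := ih (fun t => S t.castSucc) (fun t => hS t.castSucc)
    have hcard : (Finset.univ.image g).card ≤ n := by
      calc (Finset.univ.image g).card ≤ (Finset.univ : Finset (Fin n)).card :=
        Finset.card_image_le
      _ = n := by simp
    have : ((S (Fin.last n)) \ (Finset.univ.image g)).Nonempty := by
      rw [← Finset.card_pos]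
      have h1 : n + 1 ≤ (S (Fin.last n)).card := by simpa using hS (Fin.last n)
      have h2 := Finset.le_card_sdiff (Finset.univ.image g) (S (Fin.last n))
      omega
    obtain ⟨x, hx⟩ := this
    rw [Finset.mem_sdiff] at hx
    refine ⟨Fin.snoc g x, ?_, ?_⟩
    · intro a b hab
      rcases Fin.eq_castSucc_or_eq_last a with ⟨a', rfl⟩ | rfl <;>
        rcases Fin.eq_castSucc_or_eq_last b with ⟨b', rfl⟩ | rfl
      · simp only [Fin.snoc_castSucc] at hab
        exact congrArg Fin.castSucc (hginj hab)
      · simp only [Fin.snoc_castSucc, Fin.snoc_last] at hab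
        exact absurd (Finset.mem_image.2 ⟨a', Finset.mem_univ _, hab⟩) hx.2
      · simp only [Fin.snoc_castSucc, Fin.snoc_last] at hab
        exact absurd (Finset.mem_image.2 ⟨b', Finset.mem_univ _, hab.symm⟩) hx.2
      · rfl
    · intro t
      rcases Fin.eq_castSucc_or_eq_last t with ⟨t', rfl⟩ | rfl
      · simpa using hgmem t'
      · simpa using hx.1

/-- greedy embedding lemma. If the k(k-1)/2 pairs of A' = {v_1,…,v_k}
can be ordered so that the t-th pair (v_i,v_j) satisfies |(N⁺(v_i) ∩ N⁻(v_j)) \ A'| ≥ t,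
then T contains a copy of H_k with base vertices v_1,…,v_k. -/
theorem greedy_embedding {V : Type*} [Fintype V] [DecidableEq V] (r : V → V → Prop)
    [DecidableRel r] (hT : IsTournament r) (k : ℕ) (hk : 1 ≤ k)
    (v : Fin k → V) (hv : Function.Injective v)
    (e : Fin (k * (k - 1) / 2) → {p : Fin k × Fin k // p.1 < p.2})
    (he : Function.Bijective e)
    (hgood : ∀ t : Fin (k * (k - 1) / 2),
      t.1 + 1 ≤ ((outN r (v (e t).1.1) ∩ inN r (v (e t).1.2)) \
        (Finset.univ.image v)).card) :
    ∃ f : (Fin k ⊕ {p : Fin k × Fin k // p.1 < p.2}) → V,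
      Function.Injective f ∧
      (∀ i : Fin k, f (Sum.inl i) = v i) ∧
      (∀ a b, HkAdj k a b → r (f a) (f b)) := by
  obtain ⟨g, hginj, hgmem⟩ := pick_injective (k * (k - 1) / 2)
    (fun t => (outN r (v (e t).1.1) ∩ inN r (v (e t).1.2)) \ Finset.univ.image v) hgood
  set E := Equiv.ofBijective e he with hE
  refine ⟨Sum.elim v (fun w => g (E.symm w)), ?_, fun i => rfl, ?_⟩
  · have hne : ∀ (i : Fin k) (t : Fin (k * (k - 1) / 2)), v i ≠ g t := by
      intro i t h
      have := hgmem t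
      rw [Finset.mem_sdiff] at this
      exact this.2 (Finset.mem_image.2 ⟨i, Finset.mem_univ _, h⟩)
    rintro (a | a) (b | b) hab <;> simp only [Sum.elim_inl, Sum.elim_inr] at hab
    · exact congrArg Sum.inl (hv hab)
    · exact absurd hab (hne a _)
    · exact absurd hab.symm (hne b _)
    · exact congrArg Sum.inr (E.symm.injective (hginj hab))
  · rintro (a | a) (b | b) hab <;> simp only [HkAdj] at hab
    · subst hab
      have := hgmem (E.symm b)
      rw [Finset.mem_sdiff, Finset.mem_inter] at this
      have h1 := this.1.1
      rw [outN, Finset.mem_filter] at h1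
      have hEb : e (E.symm b) = b := E.apply_symm_apply b
      rw [hEb] at h1
      exact h1.2
    · subst hab
      have := hgmem (E.symm a)
      rw [Finset.mem_sdiff, Finset.mem_inter] at this
      have h1 := this.1.2
      rw [inN, Finset.mem_filter] at h1
      have hEa : e (E.symm a) = a := E.apply_symm_apply a
      rw [hEa] at h1
      exact h1.2
end
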